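/- Let P ∈ ℝ^{n×n} and Q ∈ ℝ^{m×m} be symmetric positive semidefinite with pseudoinverses P⁺, Q⁺ and null-space projections Π_P^⊥, Π_Q^⊥, and let L : ℝ^{n×m} → ℝ be any function. Then inf over Θ of L(Θ) + ‖PΘQ‖_* equals inf over triples (Θ₁, Θ₂, Θ₃) of n×m matrices of L(P⁺Θ₁Q⁺ + Π_P^⊥Θ₂ + Θ₃Π_Q^⊥) + ‖Θ₁‖_*. -/

import Mathlib

open Matrix BigOperators

/-- Nuclear norm: sum of singular values, i.e. trace of the PSD square root of `Θᵀ * Θ`. -/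
noncomputable def nuclearNorm {n m : ℕ} (Θ : Matrix (Fin n) (Fin m) ℝ) : ℝ :=
  ((Matrix.posSemidef_conjTranspose_mul_self Θ).1.eigenvectorUnitary.1 *
    diagonal ((fun x : ℝ => (x : ℝ)) ∘ (√·) ∘ (Matrix.posSemidef_conjTranspose_mul_self Θ).1.eigenvalues) *
    (star (Matrix.posSemidef_conjTranspose_mul_self Θ).1.eigenvectorUnitary : Matrix (Fin m) (Fin m) ℝ)).trace

/-- Frobenius norm. -/
noncomputable def frobNorm {n m : ℕ} (A : Matrix (Fin n) (Fin m) ℝ) : ℝ :=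
  Real.sqrt (∑ i, ∑ j, (A i j) ^ 2)

/-- `B` is the Moore–Penrose pseudoinverse of `A` (the four Penrose conditions). -/
def IsMoorePenrose {n m : ℕ} (A : Matrix (Fin n) (Fin m) ℝ) (B : Matrix (Fin m) (Fin n) ℝ) : Prop :=
  A * B * A = A ∧ B * A * B = B ∧ (A * B)ᵀ = A * B ∧ (B * A)ᵀ = B * A

/-- `Pr` is the orthogonal projection matrix onto the subspace `S`. -/
def IsOrthProjOnto {n : ℕ} (Pr : Matrix (Fin n) (Fin n) ℝ) (S : Submodule ℝ (Fin n → ℝ)) : Prop :=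
  Prᵀ = Pr ∧ Pr * Pr = Pr ∧ LinearMap.range Pr.mulVecLin = S

/-! Write `Π_P = P P⁺ = P⁺ P` for the orthogonal projection onto the range of `P`. The substitution
`Θ = P⁺ Θ₁ Q⁺ + (1 - Π_P) Θ₂ + Θ₃ (1 - Π_Q)` is onto (take `Θ₁ = P Θ Q`, `Θ₂ = Θ`, `Θ₃ = Π_P Θ`)
and gives `P Θ Q = Π_P Θ₁ Π_Q`. Multiplying by an orthogonal projection does not increase the
nuclear norm: on the left because `Θᵀ Π Θ ≤ Θᵀ Θ` and `tr √·` is monotone, on the right by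
transpose invariance. Hence every value of the second objective dominates a value of the first and
every value of the first is a value of the second, so both sets have the same lower bounds. -/

section Trace

open scoped MatrixOrder

variable {ι : Type*} [Fintype ι] [DecidableEq ι]

theorem Matrix.PosSemidef.trace_mul_nonneg {A B : Matrix ι ι ℝ} (hA : A.PosSemidef)
    (hB : B.PosSemidef) : 0 ≤ (A * B).trace := by
  have hSA : CFC.sqrt A * CFC.sqrt A = A := CFC.sqrt_mul_sqrt_self A hA.nonneg
  have h := hB.mul_mul_conjTranspose_same (CFC.sqrt A)
  rw [(CFC.sqrt_nonneg A).posSemidef.isHermitian.eq] at h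
  simpa only [trace_mul_cycle, hSA] using h.trace_nonneg

-- `tr (T⁻¹ (S - T)²) ≥ 0` and `tr (T⁻¹ (T² - S²)) ≥ 0` add up to `2 tr S ≤ 2 tr T`.
theorem Matrix.trace_le_of_mul_self_le_of_posDef {S T : Matrix ι ι ℝ} (hS : S.IsHermitian)
    (hT : T.PosDef) (h : (T * T - S * S).PosSemidef) : S.trace ≤ T.trace := by
  have hTT : T⁻¹ * T = 1 := nonsing_inv_mul T hT.det_pos.ne'.isUnit
  have hTT' : T * T⁻¹ = 1 := mul_nonsing_inv T hT.det_pos.ne'.isUnit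
  have hsq : ((S - T) * (S - T)).PosSemidef := by
    have := posSemidef_conjTranspose_mul_self (S - T)
    rwa [(hS.sub hT.isHermitian).eq] at this
  have h₁ := hT.inv.posSemidef.trace_mul_nonneg hsq
  have h₂ := hT.inv.posSemidef.trace_mul_nonneg h
  have e₁ : T⁻¹ * ((S - T) * (S - T)) = T⁻¹ * (S * S) - T⁻¹ * (S * T) - S + T := by
    simp only [Matrix.mul_sub, Matrix.sub_mul, ← Matrix.mul_assoc, hTT, Matrix.one_mul]
    abel
  have e₂ : T⁻¹ * (T * T - S * S) = T - T⁻¹ * (S * S) := by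
    rw [Matrix.mul_sub, ← Matrix.mul_assoc, hTT, Matrix.one_mul]
  have e₃ : (T⁻¹ * (S * T)).trace = S.trace := by
    rw [trace_mul_comm, Matrix.mul_assoc, hTT', Matrix.mul_one]
  rw [e₁, trace_add, trace_sub, trace_sub, e₃] at h₁
  rw [e₂, trace_sub] at h₂
  linarith

theorem Matrix.trace_le_of_mul_self_le {S T : Matrix ι ι ℝ} (hS : S.IsHermitian)
    (hT : T.PosSemidef) (h : (T * T - S * S).PosSemidef) : S.trace ≤ T.trace := by
  refine le_of_forall_pos_le_add fun δ hδ => ?_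
  set ε := δ / (Fintype.card ι + 1)
  have hε : 0 < ε := by positivity
  have hεδ : Fintype.card ι * ε ≤ δ := by
    rw [← mul_div_assoc, div_le_iff₀ (by positivity)]
    nlinarith
  have hTε : (T + ε • 1).PosDef := PosDef.posSemidef_add hT (PosDef.one.smul hε)
  have hsq : (T + ε • 1) * (T + ε • 1) - S * S
      = (T * T - S * S) + ((2 * ε) • T + (ε * ε) • 1) := by
    simp only [Matrix.add_mul, Matrix.mul_add, Matrix.smul_mul, Matrix.mul_smul, Matrix.mul_one,
      Matrix.one_mul]
    module
  have key := trace_le_of_mul_self_le_of_posDef hS hTε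
    (hsq ▸ h.add ((hT.smul (by positivity)).add (PosSemidef.one.smul (by positivity))))
  rw [trace_add, trace_smul, trace_one, smul_eq_mul] at key
  linarith

end Trace

section NuclearNorm

open scoped MatrixOrder

variable {n m : ℕ}

theorem nuclearNorm_eq_trace_sqrt (Θ : Matrix (Fin n) (Fin m) ℝ) :
    nuclearNorm Θ = (CFC.sqrt (Θᴴ * Θ)).trace := by
  have hΘ := posSemidef_conjTranspose_mul_self Θ
  rw [CFC.sqrt_eq_real_sqrt _ hΘ.nonneg, cfcₙ_eq_cfc, hΘ.isHermitian.cfc_eq, IsHermitian.cfc,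
    Unitary.conjStarAlgAut_apply]
  rfl

theorem nuclearNorm_eq_sum_sqrt_roots (Θ : Matrix (Fin n) (Fin m) ℝ) :
    nuclearNorm Θ = ((Θᴴ * Θ).charpoly.roots.map Real.sqrt).sum := by
  have hΘ := (posSemidef_conjTranspose_mul_self Θ).isHermitian
  rw [hΘ.roots_charpoly_eq_eigenvalues, Multiset.map_map, nuclearNorm, trace_mul_cycle,
    Unitary.coe_star_mul_self, Matrix.one_mul, trace_diagonal]
  rfl

open Polynomial in
theorem Polynomial.sum_sqrt_roots_X_pow_mul {p : ℝ[X]} (hp : p ≠ 0) (k : ℕ) :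
    ((X ^ k * p).roots.map Real.sqrt).sum = (p.roots.map Real.sqrt).sum := by
  rw [roots_mul (mul_ne_zero (pow_ne_zero k X_ne_zero) hp), roots_X_pow]
  simp [Multiset.map_nsmul, Multiset.sum_nsmul]

theorem nuclearNorm_conjTranspose (Θ : Matrix (Fin n) (Fin m) ℝ) :
    nuclearNorm Θᴴ = nuclearNorm Θ := by
  have h := charpoly_mul_comm' Θ Θᴴ
  simp only [Fintype.card_fin] at h
  rw [nuclearNorm_eq_sum_sqrt_roots, nuclearNorm_eq_sum_sqrt_roots, conjTranspose_conjTranspose,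
    ← Polynomial.sum_sqrt_roots_X_pow_mul (Θ * Θᴴ).charpoly_monic.ne_zero m, h,
    Polynomial.sum_sqrt_roots_X_pow_mul (Θᴴ * Θ).charpoly_monic.ne_zero]

theorem nuclearNorm_le_of_posSemidef_sub {Θ Φ : Matrix (Fin n) (Fin m) ℝ}
    (h : (Φᴴ * Φ - Θᴴ * Θ).PosSemidef) : nuclearNorm Θ ≤ nuclearNorm Φ := by
  rw [nuclearNorm_eq_trace_sqrt, nuclearNorm_eq_trace_sqrt]
  refine trace_le_of_mul_self_le (CFC.sqrt_nonneg _).posSemidef.isHermitian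
    (CFC.sqrt_nonneg _).posSemidef ?_
  rwa [CFC.sqrt_mul_sqrt_self _ (posSemidef_conjTranspose_mul_self Φ).nonneg,
    CFC.sqrt_mul_sqrt_self _ (posSemidef_conjTranspose_mul_self Θ).nonneg]

theorem nuclearNorm_proj_mul_le {E : Matrix (Fin n) (Fin n) ℝ} (hEt : Eᵀ = E)
    (hEE : E * E = E) (Θ : Matrix (Fin n) (Fin m) ℝ) :
    nuclearNorm (E * Θ) ≤ nuclearNorm Θ := by
  apply nuclearNorm_le_of_posSemidef_sub
  have hE : Eᴴ = E := hEt
  have key : Θᴴ * Θ - (E * Θ)ᴴ * (E * Θ) = ((1 - E) * Θ)ᴴ * ((1 - E) * Θ) := by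
    simp only [conjTranspose_mul, conjTranspose_sub, hE, Matrix.sub_mul, Matrix.mul_sub,
      Matrix.one_mul, Matrix.mul_assoc, ← Matrix.mul_assoc E E, hEE]
    abel
  rw [key]
  exact posSemidef_conjTranspose_mul_self _

theorem nuclearNorm_mul_proj_le {F : Matrix (Fin m) (Fin m) ℝ} (hFt : Fᵀ = F)
    (hFF : F * F = F) (Θ : Matrix (Fin n) (Fin m) ℝ) :
    nuclearNorm (Θ * F) ≤ nuclearNorm Θ := by
  have hF : Fᴴ = F := hFt
  rw [← nuclearNorm_conjTranspose, conjTranspose_mul, hF, ← nuclearNorm_conjTranspose Θ]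
  exact nuclearNorm_proj_mul_le hFt hFF Θᴴ

end NuclearNorm

section PseudoInverse

variable {k : ℕ}

section OrthProj

variable {E F : Matrix (Fin k) (Fin k) ℝ} {S : Submodule ℝ (Fin k → ℝ)}

theorem IsOrthProjOnto.mul_eq_right (hE : IsOrthProjOnto E S) (hF : IsOrthProjOnto F S) :
    E * F = F := by
  refine ext_of_mulVec_single fun j => ?_
  obtain ⟨w, hw⟩ : F *ᵥ Pi.single j 1 ∈ LinearMap.range E.mulVecLin :=
    hE.2.2 ▸ hF.2.2 ▸ LinearMap.mem_range_self _ _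
  simp only [mulVecLin_apply] at hw
  rw [← mulVec_mulVec, ← hw, mulVec_mulVec, hE.2.1]

theorem IsOrthProjOnto.unique (hE : IsOrthProjOnto E S) (hF : IsOrthProjOnto F S) : E = F := by
  calc E = Eᵀ := hE.1.symm
    _ = (F * E)ᵀ := by rw [hF.mul_eq_right hE]
    _ = E * F := by rw [transpose_mul, hE.1, hF.1]
    _ = F := hE.mul_eq_right hF

end OrthProj

theorem IsMoorePenrose.isOrthProjOnto_mul {A B : Matrix (Fin k) (Fin k) ℝ}
    (h : IsMoorePenrose A B) : IsOrthProjOnto (A * B) (LinearMap.range A.mulVecLin) := by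
  obtain ⟨hABA, -, hAB, -⟩ := h
  refine ⟨hAB, by rw [← Matrix.mul_assoc, hABA], le_antisymm ?_ ?_⟩
  · rintro _ ⟨v, rfl⟩
    exact ⟨B *ᵥ v, by simp [mulVec_mulVec]⟩
  · rintro _ ⟨v, rfl⟩
    exact ⟨A *ᵥ v, by simp [mulVec_mulVec, ← Matrix.mul_assoc, hABA]⟩

theorem IsMoorePenrose.mul_comm_of_transpose_eq {A B : Matrix (Fin k) (Fin k) ℝ} (hA : Aᵀ = A)
    (h : IsMoorePenrose A B) : B * A = A * B := by
  obtain ⟨hABA, -, hAB, hBA⟩ := h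
  have hBA' : B * A = A * Bᵀ := by rw [← hBA, transpose_mul, hA]
  have hAB' : A * B = Bᵀ * A := by rw [← hAB, transpose_mul, hA]
  calc B * A = A * B * A * Bᵀ := by rw [hABA, hBA']
    _ = A * B * (B * A) := by rw [hBA']; simp only [Matrix.mul_assoc]
    _ = Bᵀ * A * (B * A) := by rw [hAB']
    _ = Bᵀ * (A * B * A) := by simp only [Matrix.mul_assoc]
    _ = A * B := by rw [hABA, hAB']

end PseudoInverse

section PseudoInverseSandwich

variable {ι κ α : Type*} [Fintype ι] [DecidableEq ι] [Fintype κ] [DecidableEq κ] [Ring α]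
  {p p' : Matrix ι ι α} {q q' : Matrix κ κ α}

theorem pinv_sandwich_add_complements (hpc : p' * p = p * p') (x : Matrix ι κ α) :
    p' * (p * x * q) * q' + (1 - p * p') * x + p * p' * x * (1 - q * q') = x := by
  have h : p' * (p * x * q) * q' = p * p' * x * (q * q') := by
    rw [← hpc]; simp only [Matrix.mul_assoc]
  rw [h, Matrix.sub_mul, Matrix.one_mul, Matrix.mul_sub, Matrix.mul_one]
  abel

theorem mul_pinv_sandwich_add_complements_mul (hp : p * p' * p = p) (hpc : p' * p = p * p')
    (hq : q * q' * q = q) (hqc : q' * q = q * q') (x y z : Matrix ι κ α) :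
    p * (p' * x * q' + (1 - p * p') * y + z * (1 - q * q')) * q = p * p' * x * (q * q') := by
  have hp₀ : p * (1 - p * p') = 0 := by
    rw [Matrix.mul_sub, Matrix.mul_one, ← hpc, ← Matrix.mul_assoc, hp, sub_self]
  have hq₀ : (1 - q * q') * q = 0 := by rw [Matrix.sub_mul, Matrix.one_mul, hq, sub_self]
  calc p * (p' * x * q' + (1 - p * p') * y + z * (1 - q * q')) * q
      = p * p' * x * (q' * q) + p * (1 - p * p') * y * q + p * z * ((1 - q * q') * q) := by
        simp only [Matrix.mul_add, Matrix.add_mul, Matrix.mul_assoc]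
    _ = p * p' * x * (q * q') := by
        rw [hp₀, hq₀, hqc, Matrix.zero_mul, Matrix.zero_mul, Matrix.mul_zero, add_zero,
          add_zero]

end PseudoInverseSandwich

theorem Real.sInf_eq_of_lowerBounds_eq {s t : Set ℝ} (hs : s.Nonempty) (ht : t.Nonempty)
    (h : lowerBounds s = lowerBounds t) : sInf s = sInf t := by
  by_cases hb : BddBelow s
  · refine (IsGLB.csInf_eq ?_ ht).symm
    have hglb := isGLB_csInf hs hb
    unfold IsGLB at hglb ⊢
    rwa [← h]
  · have hb' : ¬BddBelow t := by rwa [BddBelow, ← h]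
    rw [Real.sInf_of_not_bddBelow hb, Real.sInf_of_not_bddBelow hb']

/-- Proposition 1, second part: the generalized nuclear norm problem equals a standard
nuclear norm problem plus unpenalized null-space components. -/
theorem stmt_13 {n m : ℕ} (P : Matrix (Fin n) (Fin n) ℝ) (hP : P.PosSemidef)
    (Q : Matrix (Fin m) (Fin m) ℝ) (hQ : Q.PosSemidef)
    (Pplus : Matrix (Fin n) (Fin n) ℝ) (hPplus : IsMoorePenrose P Pplus)
    (Qplus : Matrix (Fin m) (Fin m) ℝ) (hQplus : IsMoorePenrose Q Qplus)
    (PrP : Matrix (Fin n) (Fin n) ℝ) (hPrP : IsOrthProjOnto PrP (LinearMap.range P.mulVecLin))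
    (PrQ : Matrix (Fin m) (Fin m) ℝ) (hPrQ : IsOrthProjOnto PrQ (LinearMap.range Q.mulVecLin))
    (L : Matrix (Fin n) (Fin m) ℝ → ℝ) :
    sInf {y : ℝ | ∃ Θ : Matrix (Fin n) (Fin m) ℝ, y = L Θ + nuclearNorm (P * Θ * Q)}
      = sInf {y : ℝ | ∃ Θ₁ Θ₂ Θ₃ : Matrix (Fin n) (Fin m) ℝ,
          y = L (Pplus * Θ₁ * Qplus + (1 - PrP) * Θ₂ + Θ₃ * (1 - PrQ)) + nuclearNorm Θ₁} := by
  have hPt : Pᵀ = P := hP.1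
  have hQt : Qᵀ = Q := hQ.1
  have hPc := hPplus.mul_comm_of_transpose_eq hPt
  have hQc := hQplus.mul_comm_of_transpose_eq hQt
  obtain rfl := hPrP.unique hPplus.isOrthProjOnto_mul
  obtain rfl := hPrQ.unique hQplus.isOrthProjOnto_mul
  refine Real.sInf_eq_of_lowerBounds_eq ⟨_, 0, rfl⟩ ⟨_, 0, 0, 0, rfl⟩ (subset_antisymm ?_ ?_)
  · rintro b hb _ ⟨Θ₁, Θ₂, Θ₃, rfl⟩
    set Θ := Pplus * Θ₁ * Qplus + (1 - P * Pplus) * Θ₂ + Θ₃ * (1 - Q * Qplus)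
    have hle : nuclearNorm (P * Θ * Q) ≤ nuclearNorm Θ₁ := by
      rw [mul_pinv_sandwich_add_complements_mul hPplus.1 hPc hQplus.1 hQc]
      exact (nuclearNorm_mul_proj_le hPrQ.1 hPrQ.2.1 _).trans
        (nuclearNorm_proj_mul_le hPrP.1 hPrP.2.1 _)
    linarith [hb ⟨Θ, rfl⟩]
  · rintro b hb _ ⟨Θ, rfl⟩
    simpa only [pinv_sandwich_add_complements hPc] using hb ⟨P * Θ * Q, Θ, P * Pplus * Θ, rfl⟩
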